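/- (At most one faulty neighbouring predecessor, own predecessor correct.) Assume ϑκ ≤ Λ − d. Let H be a hardware clock. Let t_own ∈ ℝ, r_own ∈ [t_own + d − u, t_own + d], and H_own := H(r_own). Let W be a nonempty finite index set with pulse times (t_w)_{w∈W} and reception times r_w ∈ [t_w + d − u, t_w + d], and let S := {H(r_w) : w ∈ W} ∪ F, where F is either empty or a singleton {h} for an arbitrary real h (the faulty neighbour's message). Set H_min := min S, H_max := max S, and let t_min and t_max be the minimum and maximum of {t_w : w ∈ W} ∪ {t_own} (pulse times of all correct predecessors, including the own predecessor). Let C be the algorithm correction computed from (H_own, H_min, H_max), and let t_pulse be the unique real with H(t_pulse) = H_own + Λ − d − C. Then t_min + Λ − 2κ ≤ t_pulse ≤ t_max + Λ. -/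

import Mathlib

/-!
Reading the pulse time off a reference reception time `p` costs nothing but the clock's drift:
if `H t_pulse ≤ H p + (Λ - d)` then `t_pulse ≤ p + (Λ - d)`, and if `H p + (Λ - d - ϑκ) ≤ H t_pulse`
then `t_pulse ≥ p + (Λ - d)/ϑ - κ`. Whatever the faulty value, the correction `C` lies between
`min (H_own - H_min) 0` and `max (H_own - H_max) (ϑκ)`. So for each bound either the own
predecessor (when `0 ≤ C`, resp. `C ≤ ϑκ`) or any correct neighbour `w`, whose reception time
satisfies `H_min ≤ H(r_w) ≤ H_max`, serves as the reference point.
-/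

def IsHardwareClock (ϑ : ℝ) (H : ℝ → ℝ) : Prop :=
  ∀ t t' : ℝ, t ≤ t' → t' - t ≤ H t' - H t ∧ H t' - H t ≤ ϑ * (t' - t)

namespace IsHardwareClock

variable {ϑ : ℝ} {H : ℝ → ℝ}

theorem one_le (hH : IsHardwareClock ϑ H) : 1 ≤ ϑ := by
  have := hH 0 1 zero_le_one
  linarith [this.1, this.2]

theorem le_of_map_le (hH : IsHardwareClock ϑ H) {a b : ℝ} (h : H a ≤ H b) : a ≤ b := by
  by_contra! hba
  linarith [(hH b a hba.le).1]

theorem le_add_of_map_le_add (hH : IsHardwareClock ϑ H) {a b δ : ℝ} (hδ : 0 ≤ δ)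
    (h : H b ≤ H a + δ) : b ≤ a + δ := by
  rcases le_total b a with hba | hab
  · linarith
  · linarith [(hH a b hab).1]

theorem add_div_le_of_map_add_le (hH : IsHardwareClock ϑ H) {a b δ : ℝ} (hδ : 0 ≤ δ)
    (h : H a + δ ≤ H b) : a + δ / ϑ ≤ b := by
  have hab : a ≤ b := hH.le_of_map_le (by linarith)
  have hϑ : 0 < ϑ := zero_lt_one.trans_le hH.one_le
  rw [← le_sub_iff_add_le', div_le_iff₀' hϑ]
  linarith [(hH a b hab).2]

end IsHardwareClock

theorem correction_mem_Icc {κ c Δ C lo hi : ℝ} (hκ : 0 ≤ κ) (hc : 0 ≤ c)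
    (hC1 : 0 ≤ Δ → Δ ≤ c → C = Δ)
    (hC2 : Δ < 0 → C = min (lo + 3*κ/2) 0)
    (hC3 : c < Δ → C = max (hi - 3*κ/2) c) :
    C ∈ Set.Icc (min lo 0) (max hi c) := by
  rcases lt_or_ge Δ 0 with hneg | hnonneg
  · rw [hC2 hneg]
    exact ⟨min_le_min_right 0 (by linarith), (min_le_right _ _).trans (le_max_of_le_right hc)⟩
  rcases le_or_gt Δ c with hle | hgt
  · rw [hC1 hnonneg hle]
    exact ⟨(min_le_right _ _).trans hnonneg, le_max_of_le_right hle⟩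
  · rw [hC3 hgt]
    exact ⟨(min_le_right _ _).trans (hc.trans (le_max_right _ _)),
      max_le_max_right c (by linarith)⟩

theorem Option.elim_min_le {α : Type*} [LinearOrder α] (o : Option α) (x : α) :
    o.elim x (fun h => min x h) ≤ x := by
  cases o <;> simp

theorem Option.le_elim_max {α : Type*} [LinearOrder α] (o : Option α) (x : α) :
    x ≤ o.elim x (fun h => max x h) := by
  cases o <;> simp

section PulseBounds

variable {ϑ u d Λ κ : ℝ} {H : ℝ → ℝ}

theorem pulse_le_of_reference (hH : IsHardwareClock ϑ H) (hΛ : d < Λ) {t p tpulse : ℝ}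
    (hp : p ≤ t + d) (h : H tpulse ≤ H p + (Λ - d)) : tpulse ≤ t + Λ := by
  linarith [hH.le_add_of_map_le_add (by linarith) h]

theorem le_pulse_of_reference (hH : IsHardwareClock ϑ H)
    (hκ : κ = 2 * (u + (1 - 1/ϑ) * (Λ - d))) (hκ0 : 0 ≤ κ) (hϑκ : ϑ*κ ≤ Λ - d)
    {t p tpulse : ℝ} (hp : t + d - u ≤ p) (h : H p + (Λ - d - ϑ*κ) ≤ H tpulse) :
    t + Λ - 2*κ ≤ tpulse := by
  have hϑ : ϑ ≠ 0 := (zero_lt_one.trans_le hH.one_le).ne'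
  have hdrift : (Λ - d - ϑ*κ) / ϑ = Λ - d + u - 3*κ/2 := by
    rw [hκ]; field_simp; ring
  have := hH.add_div_le_of_map_add_le (by linarith) h
  linarith

end PulseBounds

theorem stmt15_general
    (ϑ u d Λ κ : ℝ)
    (hu : 0 ≤ u) (hΛ : d < Λ)
    (hκ : κ = 2 * (u + (1 - 1/ϑ) * (Λ - d)))
    (hϑκ : ϑ*κ ≤ Λ - d)
    (H : ℝ → ℝ)
    (hH : ∀ t t' : ℝ, t ≤ t' → t' - t ≤ H t' - H t ∧ H t' - H t ≤ ϑ * (t' - t))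
    (town rown : ℝ)
    (hrown : town + d - u ≤ rown ∧ rown ≤ town + d)
    (Hown : ℝ) (hHown : Hown = H rown)
    {ι : Type*} [Fintype ι] [Nonempty ι]
    (tw r : ι → ℝ)
    (hr : ∀ w : ι, tw w + d - u ≤ r w ∧ r w ≤ tw w + d)
    (fault : Option ℝ)
    (Hmin Hmax : ℝ)
    (hHmin : Hmin = fault.elim (⨅ w : ι, H (r w)) (fun h => min (⨅ w : ι, H (r w)) h))
    (hHmax : Hmax = fault.elim (⨆ w : ι, H (r w)) (fun h => max (⨆ w : ι, H (r w)) h))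
    (tmin tmax : ℝ)
    (htmin : tmin = min (⨅ w : ι, tw w) town)
    (htmax : tmax = max (⨆ w : ι, tw w) town)
    (Δ : ℝ)
    (C : ℝ)
    (hC1 : 0 ≤ Δ → Δ ≤ ϑ*κ → C = Δ)
    (hC2 : Δ < 0 → C = min (Hown - Hmin + 3*κ/2) 0)
    (hC3 : ϑ*κ < Δ → C = max (Hown - Hmax - 3*κ/2) (ϑ*κ))
    (tpulse : ℝ) (hpulse : H tpulse = Hown + Λ - d - C) :
    tmin + Λ - 2*κ ≤ tpulse ∧ tpulse ≤ tmax + Λ := by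
  have hH : IsHardwareClock ϑ H := hH
  have hκ0 : 0 ≤ κ := by
    have : 1/ϑ ≤ 1 := div_le_one_of_le₀ hH.one_le (zero_le_one.trans hH.one_le)
    rw [hκ]; nlinarith
  have hϑκ0 : 0 ≤ ϑ*κ := mul_nonneg (zero_le_one.trans hH.one_le) hκ0
  obtain ⟨w⟩ := ‹Nonempty ι›
  have hHmin_le : Hmin ≤ H (r w) :=
    hHmin ▸ (fault.elim_min_le _).trans (ciInf_le (Set.finite_range _).bddBelow w)
  have hle_Hmax : H (r w) ≤ Hmax :=
    hHmax ▸ (le_ciSup (f := fun w => H (r w)) (Set.finite_range _).bddAbove w).trans (fault.le_elim_max _)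
  have htmin_le : tmin ≤ town ∧ tmin ≤ tw w := htmin ▸
    ⟨min_le_right _ _, (min_le_left _ _).trans (ciInf_le (Set.finite_range _).bddBelow w)⟩
  have hle_tmax : town ≤ tmax ∧ tw w ≤ tmax := htmax ▸
    ⟨le_max_right _ _, (le_ciSup (Set.finite_range _).bddAbove w).trans (le_max_left _ _)⟩
  obtain ⟨hC_ge, hC_le⟩ := correction_mem_Icc hκ0 hϑκ0 hC1 hC2 hC3
  constructor
  · rcases le_max_iff.mp hC_le with hfar | hown
    · exact le_pulse_of_reference hH hκ hκ0 hϑκ (p := r w) (by linarith [(hr w).1]) (by linarith)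
    · exact le_pulse_of_reference hH hκ hκ0 hϑκ (p := rown) (by linarith [hrown.1]) (by linarith)
  · rcases min_le_iff.mp hC_ge with hfar | hown
    · exact pulse_le_of_reference hH hΛ (p := r w) (by linarith [(hr w).2]) (by linarith)
    · exact pulse_le_of_reference hH hΛ (p := rown) (by linarith [hrown.2]) (by linarith)

/-- Lemma `fault_neighbor`: the own predecessor is correct and at
most one neighbouring predecessor (whose message arrives at the arbitrary local
time carried by `fault`, if present) is faulty. -/
theorem stmt15
    (ϑ u d Λ κ : ℝ)
    (hϑ : 1 < ϑ) (hu : 0 ≤ u) (hd : u ≤ d) (hΛ : d < Λ)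
    (hκ : κ = 2 * (u + (1 - 1/ϑ) * (Λ - d)))
    (hϑκ : ϑ*κ ≤ Λ - d)
    (H : ℝ → ℝ)
    (hH : ∀ t t' : ℝ, t ≤ t' → t' - t ≤ H t' - H t ∧ H t' - H t ≤ ϑ * (t' - t))
    (town rown : ℝ)
    (hrown : town + d - u ≤ rown ∧ rown ≤ town + d)
    (Hown : ℝ) (hHown : Hown = H rown)
    {ι : Type*} [Fintype ι] [Nonempty ι]
    (tw r : ι → ℝ)
    (hr : ∀ w : ι, tw w + d - u ≤ r w ∧ r w ≤ tw w + d)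
    (fault : Option ℝ)
    (Hmin Hmax : ℝ)
    (hHmin : Hmin = fault.elim (⨅ w : ι, H (r w)) (fun h => min (⨅ w : ι, H (r w)) h))
    (hHmax : Hmax = fault.elim (⨆ w : ι, H (r w)) (fun h => max (⨆ w : ι, H (r w)) h))
    (tmin tmax : ℝ)
    (htmin : tmin = min (⨅ w : ι, tw w) town)
    (htmax : tmax = max (⨆ w : ι, tw w) town)
    (Δ : ℝ)
    (hΔ : IsLeast {x : ℝ | ∃ s : ℕ,
      x = max (Hown - Hmax + 4*(s:ℝ)*κ) (Hown - Hmin - 4*(s:ℝ)*κ)} (Δ + κ/2))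
    (C : ℝ)
    (hC1 : 0 ≤ Δ → Δ ≤ ϑ*κ → C = Δ)
    (hC2 : Δ < 0 → C = min (Hown - Hmin + 3*κ/2) 0)
    (hC3 : ϑ*κ < Δ → C = max (Hown - Hmax - 3*κ/2) (ϑ*κ))
    (tpulse : ℝ) (hpulse : H tpulse = Hown + Λ - d - C) :
    tmin + Λ - 2*κ ≤ tpulse ∧ tpulse ≤ tmax + Λ :=
  stmt15_general ϑ u d Λ κ hu hΛ hκ hϑκ H hH town rown hrown Hown hHown tw r hr fault Hmin Hmax
    hHmin hHmax tmin tmax htmin htmax Δ C hC1 hC2 hC3 tpulse hpulse
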